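/- arXiv:math/0508050 — 2 statements merged into one kernel-verified Lean document; each statement's English description precedes it below -/
import Mathlib

section
/- Let G be a finitely generated subgroup of the group of orientation-preserving homeomorphisms of the circle S¹, and suppose the set P of all points of S¹ whose G-orbit is finite is nonempty and finite. Then for every x ∈ S¹ ∖ P at least one of the following holds: (1) O(x) is dense in rg(x); (2) every accumulation point of O(x) lies in P; (3) there exists a G-invariant set K contained in the closure of rg(x) that is nonempty, compact, perfect and nowhere dense in S¹ (a Cantor set), such that O(x) ⊆ K, O(x) is dense in K, and K is contained in the closure of O(y) for every y ∈ rg(x); (4) the closure of O(x) contains a nonempty proper subset that is G-invariant, closed in the subspace topology of S¹ ∖ P, and disjoint from O(x). -/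
open Set Topology Filter

/-- The circle `S¹`, as `ℝ/ℤ`. -/
abbrev S1 := AddCircle (1 : ℝ)

/-- The group of homeomorphisms of the circle (composition as multiplication). -/
noncomputable instance : Group (S1 ≃ₜ S1) where
  mul f g := g.trans f
  one := Homeomorph.refl _
  inv f := f.symm
  mul_assoc f g h := rfl
  one_mul f := Homeomorph.ext fun _ => rfl
  mul_one f := Homeomorph.ext fun _ => rfl
  inv_mul_cancel f := Homeomorph.ext fun x => f.symm_apply_apply x

/-- A homeomorphism of the circle is orientation-preserving if it lifts to an increasing
homeomorphism of `ℝ` commuting with translation by `1`. -/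
def OrientPres (g : S1 ≃ₜ S1) : Prop :=
  ∃ F : ℝ ≃o ℝ, (∀ x : ℝ, F (x + 1) = F x + 1) ∧ ∀ x : ℝ, g (x : S1) = ((F x : ℝ) : S1)

/-- The `G`-orbit of a point `x ∈ S¹`. -/
def orbit (G : Subgroup (S1 ≃ₜ S1)) (x : S1) : Set S1 :=
  {y | ∃ g ∈ G, g x = y}

/-- The range `rg(x)`: the union of those connected components of `S¹ ∖ P` meeting the
orbit of `x`. -/
def rg (G : Subgroup (S1 ≃ₜ S1)) (P : Set S1) (x : S1) : Set S1 :=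
  ⋃ y ∈ orbit G x, connectedComponentIn Pᶜ y

/-!
Assume some accumulation point of `O(x)` lies off `P`. If `x` is isolated in `O(x)`, the derived
set of `O(x)` yields (4); otherwise `C = closure O(x)` is perfect. If `x` is interior to `C`,
either the frontier of `C` leaves `P`, yielding (4), or every component of `S¹ ∖ P` meeting `O(x)`
stays inside `C`, which is (1). Otherwise `C` has empty interior. A point `z ∈ C ∖ P` with
`x ∉ closure O(z)` yields (4) through `C ∩ closure O(z)`; if there is none, `C` is the Cantor set
of (3).

The heart of (3) is that `x` lies in the orbit closure of every `y ∈ rg(x)`. If `y` lies in a gap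
of `C`, that gap has an endpoint `α ∉ P`, and `x` accumulates `O(α)`. Were `x` outside the
closure of `O(y)`, the points `g α` near `x` would be endpoints of the gaps `g(gap)`, which
contain `g y` and so leave a small arc around `x`; all these gaps cross the finite frontier of
the arc, so there are only finitely many of them, each with finitely many endpoints.
-/

theorem IsPreconnected.inter_frontier_nonempty {X : Type*} [TopologicalSpace X] {s u : Set X}
    (hs : IsPreconnected s) (hu : IsOpen u) (hsu : (s ∩ u).Nonempty) (hsu' : ¬s ⊆ u) :
    (s ∩ frontier u).Nonempty := by
  by_contra h
  refine hsu' (hs.subset_of_closure_inter_subset hu hsu fun z ⟨hzu, hzs⟩ => ?_)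
  by_contra hz
  exact h ⟨z, hzs, hzu, by rwa [hu.interior_eq]⟩

theorem IsOpen.disjoint_frontier_connectedComponentIn {X : Type*} [TopologicalSpace X]
    [LocallyConnectedSpace X] {F : Set X} (hF : IsOpen F) (x : X) :
    Disjoint (frontier (connectedComponentIn F x)) F := by
  rw [disjoint_left]
  intro a ha haF
  rw [hF.connectedComponentIn.frontier_eq] at ha
  obtain ⟨b, hba, hbx⟩ := mem_closure_iff_nhds.mp ha.1 _
    (hF.connectedComponentIn.mem_nhds (mem_connectedComponentIn haF))
  rw [connectedComponentIn_eq hbx, ← connectedComponentIn_eq hba] at ha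
  exact ha.2 (mem_connectedComponentIn haF)

theorem exists_mem_frontier_connectedComponentIn_compl_notMem {X : Type*} [TopologicalSpace X]
    [LocallyConnectedSpace X] {C P : Set X} {w y : X} (hC : IsClosed C) (hwC : w ∈ C)
    (hy : y ∈ connectedComponentIn Pᶜ w) (hyC : y ∉ C) :
    ∃ α ∈ frontier (connectedComponentIn Cᶜ y), α ∉ P := by
  have hwP : w ∈ Pᶜ := connectedComponentIn_nonempty_iff.mp ⟨y, hy⟩
  obtain ⟨α, hαw, hαy⟩ := isPreconnected_connectedComponentIn.inter_frontier_nonempty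
    hC.isOpen_compl.connectedComponentIn ⟨y, hy, mem_connectedComponentIn hyC⟩
    fun h => connectedComponentIn_subset _ _ (h (mem_connectedComponentIn hwP)) hwC
  exact ⟨α, hαy, connectedComponentIn_subset _ _ hαw⟩

namespace AddCircle

variable {p : ℝ} [Fact (0 < p)]

instance : LocallyConnectedSpace (AddCircle p) :=
  (QuotientAddGroup.isQuotientMap_mk _).isCoinducing.locallyConnectedSpace

theorem finite_frontier_of_isPreconnected {E : Set (AddCircle p)} (hE : IsPreconnected E)
    (hE' : E ≠ univ) : (frontier E).Finite := by
  obtain ⟨c, hc⟩ := (ne_univ_iff_exists_notMem E).mp hE'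
  obtain ⟨u, rfl⟩ := QuotientAddGroup.mk_surjective c
  -- cutting the circle at `u ∉ E` makes `E` the image of an interval `I ⊆ (u, u + p)`
  let e := openPartialHomeomorphCoe p u
  have hEt : E ⊆ e.target := fun z hz hzc => hc (hzc ▸ hz)
  set I := e.symm '' E
  have hIE : ((↑) : ℝ → AddCircle p) '' I = E := e.image_symm_image_of_subset_target hEt
  have hIs : I ⊆ Ioo u (u + p) := (image_mono hEt).trans e.mapsTo_symm.image_subset
  have hI : IsPreconnected I := hE.image _ (e.continuousOn_symm.mono hEt)
  have hbdd : BddBelow I ∧ BddAbove I := ⟨bddBelow_Ioo.mono hIs, bddAbove_Ioo.mono hIs⟩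
  refine (((finite_singleton (sSup I)).insert (sInf I)).image ((↑) : ℝ → AddCircle p)).subset ?_
  rcases I.eq_empty_or_nonempty with hI0 | hI0
  · simp [← hIE, hI0]
  have hcl : closure E ⊆ (↑) '' Icc (sInf I) (sSup I) :=
    closure_minimal (hIE ▸ image_mono (subset_Icc_csInf_csSup hbdd.1 hbdd.2))
      ((isCompact_Icc.image (AddCircle.continuous_mk' p)).isClosed)
  have hint : (↑) '' Ioo (sInf I) (sSup I) ⊆ interior E :=
    interior_maximal
      (hIE ▸ image_mono (IsConnected.Ioo_csInf_csSup_subset ⟨hI0, hI⟩ hbdd.1 hbdd.2))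
      (QuotientAddGroup.isOpenMap_coe _ isOpen_Ioo)
  rintro z ⟨hzc, hzi⟩
  obtain ⟨t, ht, rfl⟩ := hcl hzc
  refine mem_image_of_mem _ ?_
  rw [← Icc_sdiff_Ioo_same (ht.1.trans ht.2)]
  exact ⟨ht, fun h => hzi (hint (mem_image_of_mem _ h))⟩

/-- Each component of `V` leaving the arc `U` through `z ∈ U` crosses one of the finitely many
frontier points of `U`. -/
theorem finite_of_forall_mem_frontier_connectedComponentIn {U V Z : Set (AddCircle p)}
    (hU : IsOpen U) (hUc : IsPreconnected U) (hU' : U ≠ univ) (hV : V ≠ univ)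
    (hZ : ∀ z ∈ Z, z ∈ U ∧ ∃ q ∉ U, z ∈ frontier (connectedComponentIn V q)) : Z.Finite := by
  refine ((finite_frontier_of_isPreconnected hUc hU').biUnion fun s _ =>
    finite_frontier_of_isPreconnected isPreconnected_connectedComponentIn
      (ne_top_of_le_ne_top hV (connectedComponentIn_subset V s))).subset ?_
  intro z hz
  obtain ⟨hzU, q, hqU, hzq⟩ := hZ z hz
  have hqV : q ∈ V := by
    by_contra hqV
    simp [connectedComponentIn_eq_empty hqV] at hzq
  obtain ⟨s, hsq, hsU⟩ := isPreconnected_connectedComponentIn.inter_frontier_nonempty hU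
    ((mem_closure_iff_nhds.mp (frontier_subset_closure hzq) U (hU.mem_nhds hzU)).mono
      (inter_comm _ _).subset)
    fun h => hqU (h (mem_connectedComponentIn hqV))
  exact mem_iUnion₂.mpr ⟨s, hsU, connectedComponentIn_eq hsq ▸ hzq⟩

end AddCircle

def InvariantUnder (G : Subgroup (S1 ≃ₜ S1)) (A : Set S1) : Prop :=
  ∀ g ∈ G, ⇑g '' A = A

section Orbits

variable {G : Subgroup (S1 ≃ₜ S1)} {A B P : Set S1} {x y : S1}

theorem invariantUnder_of_image_subset (h : ∀ g ∈ G, ⇑g '' A ⊆ A) : InvariantUnder G A :=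
  fun g hg => (h g hg).antisymm fun z hz =>
    ⟨g.symm z, h g⁻¹ (G.inv_mem hg) ⟨z, hz, rfl⟩, g.apply_symm_apply z⟩

namespace InvariantUnder

theorem compl (hA : InvariantUnder G A) : InvariantUnder G Aᶜ := fun g hg => by
  rw [image_compl_eq g.bijective, hA g hg]

theorem inter (hA : InvariantUnder G A) (hB : InvariantUnder G B) :
    InvariantUnder G (A ∩ B) := fun g hg => by
  rw [image_inter g.injective, hA g hg, hB g hg]

theorem closure (hA : InvariantUnder G A) : InvariantUnder G (closure A) := fun g hg => by
  rw [g.image_closure, hA g hg]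

theorem interior (hA : InvariantUnder G A) : InvariantUnder G (interior A) := fun g hg => by
  rw [g.image_interior, hA g hg]

theorem frontier (hA : InvariantUnder G A) : InvariantUnder G (frontier A) := fun g hg => by
  rw [g.image_frontier, hA g hg]

theorem derivedSet (hA : InvariantUnder G A) : InvariantUnder G (derivedSet A) :=
  invariantUnder_of_image_subset fun g hg => by
    simpa only [hA g hg] using g.continuous.image_derivedSet (A := A) g.injective

theorem orbit_subset (hA : InvariantUnder G A) (hx : x ∈ A) : orbit G x ⊆ A := by
  rintro _ ⟨g, hg, rfl⟩
  exact hA g hg ▸ mem_image_of_mem g hx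

theorem closure_orbit_subset (hA : InvariantUnder G A) (hA' : IsClosed A) (hx : x ∈ A) :
    _root_.closure (orbit G x) ⊆ A :=
  closure_minimal (hA.orbit_subset hx) hA'

theorem disjoint_orbit (hA : InvariantUnder G A) (hx : x ∉ A) : Disjoint A (orbit G x) :=
  disjoint_right.mpr (hA.compl.orbit_subset hx)

theorem image_connectedComponentIn (hA : InvariantUnder G A) {g : S1 ≃ₜ S1} (hg : g ∈ G)
    (hy : y ∈ A) : ⇑g '' connectedComponentIn A y = connectedComponentIn A (g y) := by
  rw [g.image_connectedComponentIn hy, hA g hg]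

end InvariantUnder

theorem mem_orbit_self : x ∈ orbit G x := ⟨1, G.one_mem, rfl⟩

theorem invariantUnder_orbit : InvariantUnder G (orbit G x) :=
  invariantUnder_of_image_subset fun g hg => by
    rintro _ ⟨_, ⟨h, hh, rfl⟩, rfl⟩
    exact ⟨g * h, G.mul_mem hg hh, rfl⟩

theorem orbit_eq_of_mem (hy : y ∈ orbit G x) : orbit G y = orbit G x :=
  (invariantUnder_orbit.orbit_subset hy).antisymm <| by
    obtain ⟨g, hg, rfl⟩ := hy
    exact invariantUnder_orbit.orbit_subset ⟨g⁻¹, G.inv_mem hg, g.symm_apply_apply x⟩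

theorem invariantUnder_setOf_finite_orbit : InvariantUnder G {x | (orbit G x).Finite} :=
  invariantUnder_of_image_subset fun g hg => by
    rintro _ ⟨z, hz, rfl⟩
    show (orbit G (g z)).Finite
    rwa [orbit_eq_of_mem ⟨g, hg, rfl⟩]

theorem closure_orbit_eq (hy : y ∈ closure (orbit G x)) (hx : x ∈ closure (orbit G y)) :
    closure (orbit G y) = closure (orbit G x) :=
  (invariantUnder_orbit.closure.closure_orbit_subset isClosed_closure hy).antisymm
    (invariantUnder_orbit.closure.closure_orbit_subset isClosed_closure hx)

theorem interior_closure_orbit_eq_empty (hx : x ∉ interior (closure (orbit G x))) :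
    interior (closure (orbit G x)) = ∅ := by
  have h := (invariantUnder_orbit.closure.interior.disjoint_orbit hx).closure_right
    isOpen_interior
  exact disjoint_self.mp (h.mono_right interior_subset)

theorem orbit_subset_rg (hx : orbit G x ⊆ Pᶜ) : orbit G x ⊆ rg G P x := fun y hy =>
  mem_iUnion₂.mpr ⟨y, hy, mem_connectedComponentIn (hx hy)⟩

end Orbits

section Alternatives

variable {G : Subgroup (S1 ≃ₜ S1)} {A C P : Set S1} {x y : S1}

theorem closure_orbit_subset_of_mem_rg (hxD : x ∈ derivedSet (orbit G x))
    (hmin : ∀ z ∈ closure (orbit G x), z ∉ P → x ∈ closure (orbit G z)) (hy : y ∈ rg G P x) :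
    closure (orbit G x) ⊆ closure (orbit G y) := by
  refine invariantUnder_orbit.closure.closure_orbit_subset isClosed_closure ?_
  set C := closure (orbit G x)
  obtain ⟨w, hw, hyw⟩ := mem_iUnion₂.mp hy
  by_cases hyC : y ∈ C
  · exact hmin y hyC (connectedComponentIn_subset _ _ hyw)
  obtain ⟨α, hαy, hαP⟩ :=
    exists_mem_frontier_connectedComponentIn_compl_notMem isClosed_closure (subset_closure hw) hyw
      hyC
  have hαC : α ∈ C := not_notMem.mp
    (disjoint_left.mp (isClosed_closure.isOpen_compl.disjoint_frontier_connectedComponentIn y) hαy)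
  have hCα : closure (orbit G α) = C := closure_orbit_eq hαC (hmin α hαC hαP)
  have hxα : x ∈ derivedSet (orbit G α) := by
    rwa [← derivedSet_closure, hCα, derivedSet_closure]
  by_contra hxy
  set U := connectedComponentIn (closure (orbit G y))ᶜ x
  have hUo : IsOpen U := isClosed_closure.isOpen_compl.connectedComponentIn
  have hUy : U ⊆ (closure (orbit G y))ᶜ := connectedComponentIn_subset _ _
  refine (Set.Infinite.of_accPt (hxα.nhds_inter (hUo.mem_nhds (mem_connectedComponentIn hxy))))
    (AddCircle.finite_of_forall_mem_frontier_connectedComponentIn (V := Cᶜ) hUo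
      isPreconnected_connectedComponentIn
      (fun h => hUy (h.symm ▸ mem_univ y) (subset_closure mem_orbit_self))
      (fun h => (h.symm ▸ mem_univ x : x ∈ Cᶜ) (subset_closure mem_orbit_self)) ?_)
  rintro _ ⟨hzU, g, hg, rfl⟩
  refine ⟨hzU, g y, fun h => hUy h (subset_closure ⟨g, hg, rfl⟩), ?_⟩
  rw [← invariantUnder_orbit.closure.compl.image_connectedComponentIn hg hyC, ← g.image_frontier]
  exact mem_image_of_mem g hαy

theorem rg_subset_closure_orbit (hx : x ∈ interior (closure (orbit G x)))
    (hfr : frontier (closure (orbit G x)) ⊆ P) : rg G P x ⊆ closure (orbit G x) := by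
  intro z hz
  obtain ⟨w, hw, hzw⟩ := mem_iUnion₂.mp hz
  have hwP : w ∈ Pᶜ := connectedComponentIn_nonempty_iff.mp ⟨z, hzw⟩
  have hwC := invariantUnder_orbit.closure.interior.orbit_subset hx hw
  by_contra hzC
  obtain ⟨u, huw, hufr⟩ := isPreconnected_connectedComponentIn.inter_frontier_nonempty
    isOpen_interior ⟨w, mem_connectedComponentIn hwP, hwC⟩
    fun h => hzC (interior_subset (h hzw))
  exact connectedComponentIn_subset _ _ huw (hfr (frontier_interior_subset hufr))

theorem exists_invariant_relClosed_subset_closure_orbit (hP : InvariantUnder G P)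
    (hA : InvariantUnder G A) (hA' : IsClosed A) (hAx : A ⊆ closure (orbit G x)) (hxA : x ∉ A)
    (hAP : ¬A ⊆ P) :
    ∃ K : Set S1, K ⊆ closure (orbit G x) ∧ K.Nonempty ∧ K ≠ closure (orbit G x) ∧
      (∀ g ∈ G, ⇑(g : S1 ≃ₜ S1) '' K = K) ∧ K ⊆ Pᶜ ∧ closure K ∩ Pᶜ ⊆ K ∧
      Disjoint K (orbit G x) := by
  refine ⟨A ∩ Pᶜ, inter_subset_left.trans hAx, not_subset.mp hAP, fun h => ?_,
    hA.inter hP.compl, inter_subset_right,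
    fun z hz => ⟨closure_minimal inter_subset_left hA' hz.1, hz.2⟩,
    (hA.disjoint_orbit hxA).mono_left inter_subset_left⟩
  exact hxA (h ▸ subset_closure mem_orbit_self : x ∈ A ∩ Pᶜ).1

end Alternatives

theorem stmt4_general (G : Subgroup (S1 ≃ₜ S1)) (P : Set S1) (hP : P = {x | (orbit G x).Finite}) :
    ∀ x : S1, x ∉ P →
      (rg G P x ⊆ closure (orbit G x)) ∨
      (∀ p : S1, AccPt p (𝓟 (orbit G x)) → p ∈ P) ∨
      (∃ K : Set S1, K ⊆ closure (rg G P x) ∧ K.Nonempty ∧ IsCompact K ∧ Perfect K ∧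
        IsNowhereDense K ∧ (∀ g ∈ G, ⇑(g : S1 ≃ₜ S1) '' K = K) ∧ orbit G x ⊆ K ∧
        K ⊆ closure (orbit G x) ∧ ∀ y ∈ rg G P x, K ⊆ closure (orbit G y)) ∨
      (∃ K : Set S1, K ⊆ closure (orbit G x) ∧ K.Nonempty ∧ K ≠ closure (orbit G x) ∧
        (∀ g ∈ G, ⇑(g : S1 ≃ₜ S1) '' K = K) ∧ K ⊆ Pᶜ ∧ closure K ∩ Pᶜ ⊆ K ∧
        Disjoint K (orbit G x)) := by
  intro x hx
  have hPinv : InvariantUnder G P := hP ▸ invariantUnder_setOf_finite_orbit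
  have hC : InvariantUnder G (closure (orbit G x)) := invariantUnder_orbit.closure
  by_cases hacc : ∀ p : S1, AccPt p (𝓟 (orbit G x)) → p ∈ P
  · exact Or.inr (Or.inl hacc)
  obtain ⟨q, hq, hqP⟩ := not_forall₂.mp hacc
  rcases em' (x ∈ derivedSet (orbit G x)) with hxD | hxD
  · exact Or.inr <| Or.inr <| Or.inr <| exists_invariant_relClosed_subset_closure_orbit hPinv
      invariantUnder_orbit.derivedSet (isClosed_derivedSet _) (derivedSet_subset_closure _) hxD
      fun h => hqP (h hq)
  by_cases hxi : x ∈ interior (closure (orbit G x))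
  · by_cases hfr : frontier (closure (orbit G x)) ⊆ P
    · exact Or.inl (rg_subset_closure_orbit hxi hfr)
    · exact Or.inr <| Or.inr <| Or.inr <| exists_invariant_relClosed_subset_closure_orbit hPinv
        hC.frontier isClosed_frontier isClosed_closure.frontier_subset (fun h => h.2 hxi) hfr
  by_cases hmin : ∀ z ∈ closure (orbit G x), z ∉ P → x ∈ closure (orbit G z)
  · have hperf : Perfect (closure (orbit G x)) := preperfect_iff_perfect_closure.mp
      (preperfect_iff_subset_derivedSet.mpr (invariantUnder_orbit.derivedSet.orbit_subset hxD))
    refine Or.inr <| Or.inr <| Or.inl ⟨closure (orbit G x),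
      closure_mono (orbit_subset_rg (hPinv.compl.orbit_subset hx)),
      ⟨x, subset_closure mem_orbit_self⟩, isClosed_closure.isCompact, hperf, ?_, hC,
      subset_closure, subset_rfl, fun y hy => closure_orbit_subset_of_mem_rg hxD hmin hy⟩
    rw [IsNowhereDense, closure_closure]
    exact interior_closure_orbit_eq_empty hxi
  push Not at hmin
  obtain ⟨z, hzC, hzP, hxz⟩ := hmin
  exact Or.inr <| Or.inr <| Or.inr <| exists_invariant_relClosed_subset_closure_orbit hPinv
    (hC.inter invariantUnder_orbit.closure) (isClosed_closure.inter isClosed_closure)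
    inter_subset_left (fun h => hxz h.2) fun h => hzP (h ⟨hzC, subset_closure mem_orbit_self⟩)

/-- Four possibilities for orbits: with `P` the (nonempty, finite) set of
points with finite `G`-orbit and `G` finitely generated, every `x ∈ S¹ ∖ P` satisfies one of:
(1) `O(x)` dense in `rg(x)`; (2) all accumulation points of `O(x)` lie in `P`;
(3) `O(x)` lies, densely, in a `G`-invariant Cantor set `K ⊆ closure (rg x)` which is
contained in the orbit closure of every point of `rg(x)`; (4) `closure (O x)` contains a
nonempty proper `G`-invariant subset, closed in `S¹ ∖ P` and disjoint from `O(x)`. -/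
theorem stmt4 (G : Subgroup (S1 ≃ₜ S1)) (hor : ∀ g ∈ G, OrientPres g) (hfg : G.FG)
    (P : Set S1) (hP : P = {x | (orbit G x).Finite}) (hPne : P.Nonempty) (hPfin : P.Finite) :
    ∀ x : S1, x ∉ P →
      (rg G P x ⊆ closure (orbit G x)) ∨
      (∀ p : S1, AccPt p (𝓟 (orbit G x)) → p ∈ P) ∨
      (∃ K : Set S1, K ⊆ closure (rg G P x) ∧ K.Nonempty ∧ IsCompact K ∧ Perfect K ∧
        IsNowhereDense K ∧ (∀ g ∈ G, ⇑(g : S1 ≃ₜ S1) '' K = K) ∧ orbit G x ⊆ K ∧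
        K ⊆ closure (orbit G x) ∧ ∀ y ∈ rg G P x, K ⊆ closure (orbit G y)) ∨
      (∃ K : Set S1, K ⊆ closure (orbit G x) ∧ K.Nonempty ∧ K ≠ closure (orbit G x) ∧
        (∀ g ∈ G, ⇑(g : S1 ≃ₜ S1) '' K = K) ∧ K ⊆ Pᶜ ∧ closure K ∩ Pᶜ ⊆ K ∧
        Disjoint K (orbit G x)) :=
  stmt4_general G P hP
end

section
/- Let G be a subgroup of the group of orientation-preserving homeomorphisms of the circle S¹, let P ⊆ S¹ be a nonempty finite G-invariant set, and let K ⊆ S¹ ∖ P be a nonempty G-invariant set that is closed in the subspace topology of S¹ ∖ P, whose closure in S¹ is perfect and nowhere dense, and such that the G-orbit of every point of K is dense in K. Let I be a connected component of S¹ ∖ (closure(K) ∪ P) and suppose some endpoint a of I lies in K. Then for every y ∈ I, K is contained in the closure of O(y). -/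
open Set Topology Filter

/-!
Let `y ∈ I`, `k ∈ K` and `U` a neighbourhood of `k`. Since `closure K` is perfect and `K` is
relatively closed off the finite set `P`, `k` is an accumulation point of `K`, hence of the
orbit of `a`. Cutting the circle open at `k`, two orbit points `p = g a` and `p'` approach `k`
from the same side, with `p` closer to `k` than `p'`, both inside `U`. The set `g(I ∪ {a})`
is connected and meets the invariant set `K` only in `p`; so it avoids `k` and `p'`, which
traps it in the arc between them. In particular `g y ∈ U`.
-/

theorem AccPt.of_perfect_closure {X : Type*} [TopologicalSpace X] {K O : Set X} (hO : IsOpen O)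
    (hKO : K ⊆ O) (hKcl : closure K ∩ O ⊆ K) (hK : Perfect (closure K)) {k : X} (hk : k ∈ K) :
    AccPt k (𝓟 K) :=
  ((hK.acc k (subset_closure hk)).nhds_inter (hO.mem_nhds (hKO hk))).mono
    (principal_mono.2 (inter_comm O _ ▸ hKcl))

theorem AccPt.of_subset_closure {X : Type*} [TopologicalSpace X] [T1Space X] {x : X}
    {C O : Set X} (h : AccPt x (𝓟 C)) (hC : C ⊆ closure O) : AccPt x (𝓟 O) := by
  rw [← mem_derivedSet, ← derivedSet_closure]
  exact h.mono (principal_mono.2 hC)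

theorem mem_closure_or_of_coe_mem_closure {κ : ℝ} {B : Set ℝ} (hB : B ⊆ Ioo κ (κ + 1))
    (h : (κ : S1) ∈ closure (((↑) : ℝ → S1) '' B)) : κ ∈ closure B ∨ κ + 1 ∈ closure B := by
  have hBIcc : closure B ⊆ Icc κ (κ + 1) :=
    closure_minimal (hB.trans Ioo_subset_Icc_self) isClosed_Icc
  have hcompact : IsCompact (closure B) := isCompact_Icc.of_isClosed_subset isClosed_closure hBIcc
  obtain ⟨t, ht, htκ⟩ : (κ : S1) ∈ ((↑) : ℝ → S1) '' closure B :=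
    closure_minimal (image_mono subset_closure)
      (hcompact.image (AddCircle.continuous_mk' 1)).isClosed h
  rcases (hBIcc ht).2.lt_or_eq with hlt | rfl
  · left
    rwa [← (AddCircle.coe_eq_coe_iff_of_mem_Ico ⟨(hBIcc ht).1, hlt⟩
      (left_mem_Ico.2 (lt_add_one κ))).1 htκ]
  · exact Or.inr ht

theorem exists_pair_near_of_mem_closure {κ η : ℝ} {B : Set ℝ} (hB : B ⊆ Ioo κ (κ + 1))
    (h : κ ∈ closure B ∨ κ + 1 ∈ closure B) (hη : 0 < η) :
    ∃ t ∈ B, ∃ t' ∈ B, (t < t' ∧ t' < κ + η) ∨ (κ + 1 - η < t' ∧ t' < t) := by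
  rcases h with h | h
  · obtain ⟨t', ht', hdist'⟩ := Metric.mem_closure_iff.1 h η hη
    have hκt' := (hB ht').1
    obtain ⟨t, ht, hdist⟩ := Metric.mem_closure_iff.1 h (t' - κ) (sub_pos.2 hκt')
    rw [Real.dist_eq, abs_sub_lt_iff] at hdist hdist'
    exact ⟨t, ht, t', ht', Or.inl ⟨by linarith, by linarith⟩⟩
  · obtain ⟨t', ht', hdist'⟩ := Metric.mem_closure_iff.1 h η hη
    have ht'κ := (hB ht').2
    obtain ⟨t, ht, hdist⟩ := Metric.mem_closure_iff.1 h (κ + 1 - t') (sub_pos.2 ht'κ)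
    rw [Real.dist_eq, abs_sub_lt_iff] at hdist hdist'
    exact ⟨t, ht, t', ht', Or.inr ⟨by linarith, by linarith⟩⟩

theorem IsPreconnected.subset_coe_image_Ioo {κ t t' : ℝ} {D : Set S1} (hD : IsPreconnected D)
    (hκD : (κ : S1) ∉ D) (ht : t ∈ Ioo κ (κ + 1)) (htD : (t : S1) ∈ D) (ht'D : (t' : S1) ∉ D) :
    (t < t' → D ⊆ (↑) '' Ioo κ t') ∧ (t' < t → D ⊆ (↑) '' Ioo t' (κ + 1)) := by
  let φ := AddCircle.openPartialHomeomorphCoe 1 κ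
  have hsource : φ.source = Ioo κ (κ + 1) := by simp [φ]
  have hDφ : D ⊆ φ.target := fun x hx => by
    simpa [φ] using fun hxκ : x = κ => hκD (hxκ ▸ hx)
  have hlift : ∀ x ∈ D, φ.symm x ∈ Ioo κ (κ + 1) ∧ ((φ.symm x : ℝ) : S1) = x := fun x hx =>
    ⟨hsource ▸ φ.map_target (hDφ hx), φ.right_inv (hDφ hx)⟩
  have hS : OrdConnected (φ.symm '' D) :=
    (hD.image _ (φ.continuousOn_symm.mono hDφ)).ordConnected
  have htS : t ∈ φ.symm '' D := ⟨t, htD, φ.left_inv (hsource ▸ ht)⟩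
  have ht'S : t' ∉ φ.symm '' D := by
    rintro ⟨x, hx, rfl⟩
    exact ht'D (by rwa [(hlift x hx).2])
  refine ⟨fun htt' x hx => ⟨φ.symm x, ⟨(hlift x hx).1.1, ?_⟩, (hlift x hx).2⟩,
    fun ht't x hx => ⟨φ.symm x, ⟨?_, (hlift x hx).1.2⟩, (hlift x hx).2⟩⟩
  · exact lt_of_not_ge fun h => ht'S (hS.out htS (mem_image_of_mem _ hx) ⟨htt'.le, h⟩)
  · exact lt_of_not_ge fun h => ht'S (hS.out (mem_image_of_mem _ hx) htS ⟨h, ht't.le⟩)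

theorem exists_pair_confining_of_accPt {A : Set S1} {k : S1} (hk : AccPt k (𝓟 A))
    {U : Set S1} (hU : U ∈ 𝓝 k) :
    ∃ p ∈ A, ∃ p' ∈ A, p ≠ k ∧ p ≠ p' ∧
      ∀ D : Set S1, IsPreconnected D → k ∉ D → p ∈ D → p' ∉ D → D ⊆ U := by
  obtain ⟨κ, rfl⟩ := QuotientAddGroup.mk_surjective k
  let φ := AddCircle.openPartialHomeomorphCoe 1 κ
  have hsource : φ.source = Ioo κ (κ + 1) := by simp [φ]
  have htarget : φ.target = {(κ : S1)}ᶜ := by simp [φ]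
  set B := φ.symm '' (A \ {(κ : S1)}) with hBdef
  have hB : B ⊆ Ioo κ (κ + 1) := by
    rintro _ ⟨x, hx, rfl⟩
    exact hsource ▸ φ.map_target (htarget ▸ hx.2)
  have hcoeB : ((↑) : ℝ → S1) '' B = A \ {(κ : S1)} := by
    rw [hBdef, image_image]
    exact (image_congr fun x hx => φ.right_inv (htarget ▸ hx.2)).trans (image_id _)
  have hA : ∀ {s}, s ∈ B → (s : S1) ∈ A \ {(κ : S1)} := fun hs => hcoeB ▸ mem_image_of_mem _ hs
  have hcl : κ ∈ closure B ∨ κ + 1 ∈ closure B := by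
    refine mem_closure_or_of_coe_mem_closure hB ?_
    rw [hcoeB, mem_closure_iff_clusterPt, ← accPt_principal_iff_clusterPt]
    exact hk
  obtain ⟨η, hη, hηU⟩ := Metric.mem_nhds_iff.1
    ((AddCircle.continuous_mk' 1).continuousAt.preimage_mem_nhds hU)
  have hball : ∀ s, κ - η < s → s < κ + η → (s : S1) ∈ U := fun s h₁ h₂ =>
    hηU (by rw [Metric.mem_ball, Real.dist_eq, abs_sub_lt_iff]; constructor <;> linarith)
  obtain ⟨t, ht, t', ht', hside⟩ := exists_pair_near_of_mem_closure hB hcl hη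
  refine ⟨t, (hA ht).1, t', (hA ht').1, (hA ht).2, fun htt' => ?_, fun D hD hκD htD ht'D => ?_⟩
  · have := (AddCircle.coe_eq_coe_iff_of_mem_Ico (Ioo_subset_Ico_self (hB ht))
      (Ioo_subset_Ico_self (hB ht'))).1 htt'
    subst this
    rcases hside with ⟨h, -⟩ | ⟨-, h⟩ <;> exact h.false
  have hconfined := hD.subset_coe_image_Ioo hκD (hB ht) htD ht'D
  rcases hside with ⟨htt', ht'η⟩ | ⟨hηt', ht't⟩
  · refine (hconfined.1 htt').trans ?_
    rintro _ ⟨s, hs, rfl⟩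
    exact hball s (by linarith [hs.1]) (by linarith [hs.2])
  · refine (hconfined.2 ht't).trans ?_
    rintro _ ⟨s, hs, rfl⟩
    rw [← sub_add_cancel s 1, AddCircle.coe_add_period]
    exact hball (s - 1) (by linarith [hs.1]) (by linarith [hs.2])

theorem orbit_subset_of_invariant {G : Subgroup (S1 ≃ₜ S1)} {K : Set S1}
    (hKinv : ∀ g ∈ G, ⇑(g : S1 ≃ₜ S1) '' K = K) {a : S1} (ha : a ∈ K) : orbit G a ⊆ K := by
  rintro _ ⟨g, hg, rfl⟩
  exact hKinv g hg ▸ mem_image_of_mem g ha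

theorem apply_mem_iff_of_invariant {G : Subgroup (S1 ≃ₜ S1)} {K : Set S1}
    (hKinv : ∀ g ∈ G, ⇑(g : S1 ≃ₜ S1) '' K = K) {g : S1 ≃ₜ S1} (hg : g ∈ G) {x : S1} :
    g x ∈ K ↔ x ∈ K := by
  conv_lhs => rw [← hKinv g hg]
  exact g.injective.mem_set_image

theorem stmt5_general (G : Subgroup (S1 ≃ₜ S1))
    (P : Set S1) (hPfin : P.Finite)
    (K : Set S1) (hKP : K ⊆ Pᶜ)
    (hKinv : ∀ g ∈ G, ⇑(g : S1 ≃ₜ S1) '' K = K)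
    (hKcl : closure K ∩ Pᶜ ⊆ K)
    (hKperf : Perfect (closure K))
    (hKdense : ∀ x ∈ K, K ⊆ closure (orbit G x))
    (I : Set S1) (hI : ∃ w ∈ (closure K ∪ P)ᶜ, I = connectedComponentIn (closure K ∪ P)ᶜ w)
    (a : S1) (ha : a ∈ closure I \ I) (haK : a ∈ K) :
    ∀ y ∈ I, K ⊆ closure (orbit G y) := by
  obtain ⟨w, -, rfl⟩ := hI
  set I := connectedComponentIn (closure K ∪ P)ᶜ w
  have hIK : ∀ x ∈ I, x ∉ K := fun x hx hxK =>
    connectedComponentIn_subset _ _ hx (Or.inl (subset_closure hxK))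
  have hD₀ : IsPreconnected (insert a I) :=
    isPreconnected_connectedComponentIn.subset_closure (subset_insert _ _)
      (insert_subset ha.1 subset_closure)
  intro y hy k hk
  have hacc : AccPt k (𝓟 (orbit G a)) :=
    (AccPt.of_perfect_closure hPfin.isClosed.isOpen_compl hKP hKcl hKperf hk).of_subset_closure
      (hKdense a haK)
  refine mem_closure_iff_nhds.2 fun U hU => ?_
  obtain ⟨_, ⟨g, hg, rfl⟩, p', hp', hpk, hpp', hconfined⟩ :=
    exists_pair_confining_of_accPt hacc hU
  have hDK : ∀ x ∈ g '' insert a I, x ∈ K → x = g a := by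
    rintro _ ⟨x, rfl | hx, rfl⟩ hxK
    · rfl
    · exact absurd ((apply_mem_iff_of_invariant hKinv hg).1 hxK) (hIK x hx)
  refine ⟨g y, hconfined _ (hD₀.image _ g.continuous.continuousOn)
    (fun h => hpk (hDK k h hk).symm) (mem_image_of_mem _ (mem_insert _ _))
    (fun h => hpp' (hDK p' h (orbit_subset_of_invariant hKinv haK hp')).symm)
    (mem_image_of_mem _ (mem_insert_of_mem _ hy)), g, hg, rfl⟩

/-- If `K ⊆ S¹ ∖ P` is a nonempty `G`-invariant set, closed in `S¹ ∖ P`,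
whose closure is perfect and nowhere dense, all of whose points have orbits dense in `K`,
and `I` is a connected component of `S¹ ∖ (closure K ∪ P)` having an endpoint `a ∈ K`,
then `K` is contained in the orbit closure of every `y ∈ I`. -/
theorem stmt5 (G : Subgroup (S1 ≃ₜ S1)) (hor : ∀ g ∈ G, OrientPres g)
    (P : Set S1) (hPne : P.Nonempty) (hPfin : P.Finite)
    (hPinv : ∀ g ∈ G, ⇑(g : S1 ≃ₜ S1) '' P = P)
    (K : Set S1) (hKP : K ⊆ Pᶜ) (hKne : K.Nonempty)
    (hKinv : ∀ g ∈ G, ⇑(g : S1 ≃ₜ S1) '' K = K)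
    (hKcl : closure K ∩ Pᶜ ⊆ K)
    (hKperf : Perfect (closure K)) (hKnwd : IsNowhereDense (closure K))
    (hKdense : ∀ x ∈ K, K ⊆ closure (orbit G x))
    (I : Set S1) (hI : ∃ w ∈ (closure K ∪ P)ᶜ, I = connectedComponentIn (closure K ∪ P)ᶜ w)
    (a : S1) (ha : a ∈ closure I \ I) (haK : a ∈ K) :
    ∀ y ∈ I, K ⊆ closure (orbit G y) :=
  stmt5_general G P hPfin K hKP hKinv hKcl hKperf hKdense I hI a ha haK
end
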